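/- arXiv:1903.00347 — 3 statements merged into one kernel-verified Lean document; each statement's English description precedes it below -/
import Mathlib

section
/- Let m ≥ 1 and let E : F_m → Q_m(ℤ)ˣ be the Magnus expansion into the reduced free algebra over ℤ. Then for every integer n ≥ 1, every w ∈ F_m, every i ∈ {1,…,m} and every ε ∈ {1,−1}, one has the exact identity E((w⁻¹ x_i^ε w)^n) = 1 + ε·n·E(w)⁻¹ X_i E(w) in Q_m(ℤ). (This is the computation E((w⁻¹ α_i^ε w)^n) = (1 + ε P(X_i) + O(2))^n = 1 + ε n P(X_i) + O(2) carried out in the proof of Claim 4.2(1) of the paper.) -/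
def ReducedRel (R : Type*) [CommRing R] (m : ℕ) :
    FreeAlgebra R (Fin m) → FreeAlgebra R (Fin m) → Prop :=
  fun x y => ∃ (i : Fin m) (a : FreeAlgebra R (Fin m)),
    x = FreeAlgebra.ι R i * a * FreeAlgebra.ι R i ∧ y = 0

abbrev ReducedFreeAlgebra (R : Type*) [CommRing R] (m : ℕ) :=
  RingQuot (ReducedRel R m)

def ReducedFreeAlgebra.X (R : Type*) [CommRing R] (m : ℕ) (i : Fin m) :
    ReducedFreeAlgebra R m :=
  RingQuot.mkRingHom (ReducedRel R m) (FreeAlgebra.ι R i)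

lemma ReducedFreeAlgebra.X_mul_X (R : Type*) [CommRing R] (m : ℕ) (i : Fin m) :
    ReducedFreeAlgebra.X R m i * ReducedFreeAlgebra.X R m i = 0 := by
  have h : ReducedRel R m (FreeAlgebra.ι R i * 1 * FreeAlgebra.ι R i) 0 := ⟨i, 1, rfl, rfl⟩
  have h2 := RingQuot.mkRingHom_rel h
  simpa [ReducedFreeAlgebra.X, map_mul, map_one, map_zero] using h2

lemma ReducedFreeAlgebra.isNilpotent_X (R : Type*) [CommRing R] (m : ℕ) (i : Fin m) :
    IsNilpotent (ReducedFreeAlgebra.X R m i) :=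
  ⟨2, by rw [pow_two, ReducedFreeAlgebra.X_mul_X]⟩

/-- The Magnus expansion `E : F_m → Q_m(R)ˣ`, `E(x i) = 1 + X i`. -/
noncomputable def magnus (R : Type*) [CommRing R] (m : ℕ) :
    FreeGroup (Fin m) →* (ReducedFreeAlgebra R m)ˣ :=
  FreeGroup.lift fun i =>
    ((ReducedFreeAlgebra.isNilpotent_X R m i).isUnit_one_add).unit

lemma one_add_sq_zero_pow {A : Type*} [Ring A] (c : A) (hc : c * c = 0) (n : ℕ) :
    (1 + c) ^ n = 1 + n • c := by
  induction n with
  | zero => simp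
  | succ k ih =>
      rw [pow_succ, ih, succ_nsmul]
      have h1 : (1 + k • c) * (1 + c) = 1 + c + k • c + (k • c) * c := by noncomm_ring
      rw [h1, smul_mul_assoc, hc, smul_zero, add_zero]
      abel

/-- The exact identity `E((w⁻¹ xᵢ^ε w)^n) = 1 + ε n E(w)⁻¹ Xᵢ E(w)` in the reduced
free algebra `Q_m(ℤ)`, for every `n ≥ 1`, `w ∈ F_m`, index `i` and `ε ∈ {1, -1}`. -/
theorem magnus_conj_pow (m : ℕ) (hm : 1 ≤ m) (n : ℕ) (hn : 1 ≤ n)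
    (w : FreeGroup (Fin m)) (i : Fin m) (ε : ℤ) (hε : ε = 1 ∨ ε = -1) :
    ((magnus ℤ m ((w⁻¹ * FreeGroup.of i ^ ε * w) ^ n) : (ReducedFreeAlgebra ℤ m)ˣ) :
        ReducedFreeAlgebra ℤ m) =
      1 + (ε * n) •
        ((((magnus ℤ m w)⁻¹ : (ReducedFreeAlgebra ℤ m)ˣ) : ReducedFreeAlgebra ℤ m) *
          ReducedFreeAlgebra.X ℤ m i *
          ((magnus ℤ m w : (ReducedFreeAlgebra ℤ m)ˣ) : ReducedFreeAlgebra ℤ m)) := by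
  set u := magnus ℤ m w with hu
  set X := ReducedFreeAlgebra.X ℤ m i with hX
  set Y : ReducedFreeAlgebra ℤ m := (↑u⁻¹ : ReducedFreeAlgebra ℤ m) * X * (↑u : ReducedFreeAlgebra ℤ m) with hY
  have huu : (↑u : ReducedFreeAlgebra ℤ m) * (↑u⁻¹ : ReducedFreeAlgebra ℤ m) = 1 := u.mul_inv
  have hY2 : Y * Y = 0 := by
    have h1 : Y * Y = (↑u⁻¹ : ReducedFreeAlgebra ℤ m) * X *
        ((↑u : ReducedFreeAlgebra ℤ m) * (↑u⁻¹ : ReducedFreeAlgebra ℤ m)) * X *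
        (↑u : ReducedFreeAlgebra ℤ m) := by rw [hY]; noncomm_ring
    rw [h1, huu, mul_one, mul_assoc _ X X, hX, ReducedFreeAlgebra.X_mul_X, mul_zero, zero_mul]
  have hvval : ((magnus ℤ m (FreeGroup.of i) : (ReducedFreeAlgebra ℤ m)ˣ) :
      ReducedFreeAlgebra ℤ m) = 1 + X := by
    simp [magnus, IsUnit.unit_spec]; exact hX.symm
  have hvinv : (((magnus ℤ m (FreeGroup.of i))⁻¹ : (ReducedFreeAlgebra ℤ m)ˣ) :
      ReducedFreeAlgebra ℤ m) = 1 - X := by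
    apply Units.inv_eq_of_mul_eq_one_right
    rw [hvval]
    have h2 : (1 + X) * (1 - X) = 1 + X - X - X * X := by noncomm_ring; rw [mul_smul_comm]
    rw [h2, hX, ReducedFreeAlgebra.X_mul_X, sub_zero, add_sub_cancel_right]
  have hεval : ((magnus ℤ m (FreeGroup.of i ^ ε) : (ReducedFreeAlgebra ℤ m)ˣ) :
      ReducedFreeAlgebra ℤ m) = 1 + ε • X := by
    rcases hε with h | h <;> subst h
    · simpa using hvval
    · simpa [sub_eq_add_neg] using hvinv
  have key : ((magnus ℤ m ((w⁻¹ * FreeGroup.of i ^ ε * w) ^ n) :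
      (ReducedFreeAlgebra ℤ m)ˣ) : ReducedFreeAlgebra ℤ m) = ((1 + ε • Y)) ^ n := by
    rw [map_pow, map_mul, map_mul, map_inv, Units.val_pow_eq_pow_val, Units.val_mul,
      Units.val_mul, hεval, ← hu]
    congr 1
    rw [mul_add, add_mul, mul_one, Units.inv_mul, mul_smul_comm, smul_mul_assoc, hY]
  have hc2 : (ε • Y) * (ε • Y) = 0 := by
    rw [smul_mul_assoc, mul_smul_comm, hY2]; simp
  rw [key, one_add_sq_zero_pow _ hc2 n]
  congr 1
  rw [mul_comm, ← smul_smul, natCast_zsmul]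
end

section
/- Let n ≥ 2 be an integer, m ≥ 1, and let E : F_m → Q_m(ℤ/nℤ)ˣ be the Magnus expansion into the reduced free algebra with coefficients in ℤ/nℤ. Then for every w ∈ F_m, every i ∈ {1,…,m} and every ε ∈ {1,−1}, one has E((w⁻¹ x_i^ε w)^n) = 1 in Q_m(ℤ/nℤ)ˣ. (This is Claim 4.2(1) of the paper: since φ'∘η'_q(a'^ε_{ij}) is a conjugate w⁻¹ α_i^ε w of a generator, the Magnus expansion of its n-th power is congruent to 1 + O(2) modulo n.) -/
/-! Since `X i ^ 2 = 0`, `E (x i) ^ n = (1 + X i) ^ n = 1 + n • X i`, which is `1` over `ℤ/nℤ`;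
and `(w⁻¹ g^ε w)^n = w⁻¹ (g^n)^ε w`, so the `n`-th power of any conjugate of `x i ^ ε` is killed too. -/

theorem one_add_pow_of_mul_self_eq_zero {A : Type*} [Ring A] {x : A} (hx : x * x = 0) (k : ℕ) :
    (1 + x) ^ k = 1 + k * x := by
  induction k with
  | zero => simp
  | succ k ih =>
    calc (1 + x) ^ (k + 1) = (1 + k * x) * (1 + x) := by rw [pow_succ, ih]
      _ = 1 + (k + 1) * x + k * (x * x) := by noncomm_ring
      _ = 1 + ((k + 1 : ℕ) : A) * x := by rw [hx]; push_cast; simp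

theorem conj_zpow_pow {G : Type*} [Group G] (w g : G) (ε : ℤ) (n : ℕ) :
    (w⁻¹ * g ^ ε * w) ^ n = w⁻¹ * (g ^ n) ^ ε * w := by
  simpa [← zpow_natCast, ← zpow_mul, mul_comm] using conj_pow (a := w⁻¹) (b := g ^ ε) (i := n)

theorem magnus_of_pow_eq_one {R : Type*} [CommRing R] (m : ℕ) {n : ℕ} (hn : (n : R) = 0)
    (i : Fin m) : magnus R m (FreeGroup.of i) ^ n = 1 := by
  ext
  have hn' : (n : ReducedFreeAlgebra R m) = 0 := by
    rw [← map_natCast (algebraMap R (ReducedFreeAlgebra R m)), hn, map_zero]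
  simp [magnus, one_add_pow_of_mul_self_eq_zero (ReducedFreeAlgebra.X_mul_X R m i), hn']

theorem magnus_conj_pow_eq_one_mod_general (m : ℕ) (n : ℕ)
    (w : FreeGroup (Fin m)) (i : Fin m) (ε : ℤ) :
    magnus (ZMod n) m ((w⁻¹ * FreeGroup.of i ^ ε * w) ^ n) = 1 := by
  rw [conj_zpow_pow, map_mul, map_mul, map_zpow, map_pow,
    magnus_of_pow_eq_one m (ZMod.natCast_self n), one_zpow, mul_one, map_inv, inv_mul_cancel]

/-- Over `ℤ/nℤ` (`n ≥ 2`), the Magnus expansion of the `n`-th power of a conjugate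
`w⁻¹ xᵢ^ε w` of a generator is trivial: `E((w⁻¹ xᵢ^ε w)^n) = 1` in `Q_m(ℤ/nℤ)ˣ`. -/
theorem magnus_conj_pow_eq_one_mod (m : ℕ) (hm : 1 ≤ m) (n : ℕ) (hn : 2 ≤ n)
    (w : FreeGroup (Fin m)) (i : Fin m) (ε : ℤ) (hε : ε = 1 ∨ ε = -1) :
    magnus (ZMod n) m ((w⁻¹ * FreeGroup.of i ^ ε * w) ^ n) = 1 :=
  magnus_conj_pow_eq_one_mod_general m n w i ε
end

section
/- Let p be a prime number and m ≥ 1, and let E : F_m → D_{m,p}(ℤ)ˣ be the Magnus expansion into the degree-(< p) truncated free algebra over ℤ. Then for every w ∈ F_m, the element E(w)^p − 1 lies in the ideal of D_{m,p}(ℤ) generated by p. (This is the claim, quoted from [MWY19, Claim 3.6(1)] and used in the proof of Proposition 3.3 of the paper, that for any word w in α_1,…,α_m one has E(w^p) ≡ 1 + (terms of degree ≥ p) modulo p.) -/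
/-- The defining relation of the degree-`< p` truncated free algebra `D_{m,p}(R)`:
every product of `p` generators is identified with `0`. -/
def TruncRel (R : Type*) [CommRing R] (m p : ℕ) :
    FreeAlgebra R (Fin m) → FreeAlgebra R (Fin m) → Prop :=
  fun x y => ∃ f : Fin p → Fin m,
    x = (List.ofFn fun j => FreeAlgebra.ι R (f j)).prod ∧ y = 0

/-- The truncated free algebra `D_{m,p}(R) = A_m(R)/I_p`, the quotient of the free
noncommutative `R`-algebra on `X_1, …, X_m` by the two-sided ideal generated by all
products of `p` generators (the terms of degree `≥ p`). -/
abbrev TruncatedFreeAlgebra (R : Type*) [CommRing R] (m p : ℕ) :=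
  RingQuot (TruncRel R m p)

/-- The image of the generator `X i` in `D_{m,p}(R)`. -/
def TruncatedFreeAlgebra.X (R : Type*) [CommRing R] (m p : ℕ) (i : Fin m) :
    TruncatedFreeAlgebra R m p :=
  RingQuot.mkRingHom (TruncRel R m p) (FreeAlgebra.ι R i)

lemma TruncatedFreeAlgebra.X_pow (R : Type*) [CommRing R] (m p : ℕ) (i : Fin m) :
    TruncatedFreeAlgebra.X R m p i ^ p = 0 := by
  have h : TruncRel R m p ((List.ofFn fun _ : Fin p => FreeAlgebra.ι R i).prod) 0 :=
    ⟨fun _ => i, rfl, rfl⟩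
  have h2 := RingQuot.mkRingHom_rel h
  rw [List.ofFn_const, List.prod_replicate] at h2
  simpa [TruncatedFreeAlgebra.X, map_pow, map_zero] using h2

lemma TruncatedFreeAlgebra.isNilpotent_X (R : Type*) [CommRing R] (m p : ℕ)
    (i : Fin m) : IsNilpotent (TruncatedFreeAlgebra.X R m p i) :=
  ⟨p, TruncatedFreeAlgebra.X_pow R m p i⟩

/-- The Magnus expansion `E : F_m → D_{m,p}(R)ˣ`, `E(x i) = 1 + X i`. -/
noncomputable def magnusTrunc (R : Type*) [CommRing R] (m p : ℕ) :
    FreeGroup (Fin m) →* (TruncatedFreeAlgebra R m p)ˣ :=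
  FreeGroup.lift fun i =>
    ((TruncatedFreeAlgebra.isNilpotent_X R m p i).isUnit_one_add).unit

namespace MagnusAux

variable (m p : ℕ)

/-- Monomials of length at least `k` in the truncated free algebra. -/
def S (k : ℕ) : Set (TruncatedFreeAlgebra ℤ m p) :=
  {x | ∃ l : List (Fin m), k ≤ l.length ∧ x = (l.map (TruncatedFreeAlgebra.X ℤ m p)).prod}

/-- The span of monomials of length at least `k`. -/
def P (k : ℕ) : Submodule ℤ (TruncatedFreeAlgebra ℤ m p) :=
  Submodule.span ℤ (S m p k)

lemma P_antitone {j k : ℕ} (h : j ≤ k) : P m p k ≤ P m p j :=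
  Submodule.span_mono fun x ⟨l, hl, hx⟩ => ⟨l, h.trans hl, hx⟩

lemma one_mem_P_zero : (1 : TruncatedFreeAlgebra ℤ m p) ∈ P m p 0 :=
  Submodule.subset_span ⟨[], by simp, by simp⟩

lemma X_mem_P_one (i : Fin m) : TruncatedFreeAlgebra.X ℤ m p i ∈ P m p 1 :=
  Submodule.subset_span ⟨[i], by simp, by simp⟩

lemma P_zero_eq_top : P m p 0 = ⊤ := by
  rw [eq_top_iff]
  have h1 : Algebra.adjoin ℤ
      (Set.range (TruncatedFreeAlgebra.X ℤ m p)) = ⊤ := by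
    have hX : Set.range (TruncatedFreeAlgebra.X ℤ m p)
        = (RingQuot.mkAlgHom ℤ (TruncRel ℤ m p)) ''
          (Set.range (FreeAlgebra.ι ℤ : Fin m → FreeAlgebra ℤ (Fin m))) := by
      rw [← Set.range_comp]
      refine congrArg _ (funext fun i => ?_)
      show TruncatedFreeAlgebra.X ℤ m p i = _
      rw [TruncatedFreeAlgebra.X, ← RingQuot.mkAlgHom_coe ℤ (TruncRel ℤ m p)]
      rfl
    rw [hX, ← AlgHom.map_adjoin, FreeAlgebra.adjoin_range_ι, Algebra.map_top,
      AlgHom.range_eq_top]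
    exact RingQuot.mkAlgHom_surjective ℤ _
  have h2 := Algebra.adjoin_eq_span ℤ
    (Set.range (TruncatedFreeAlgebra.X ℤ m p))
  rw [h1] at h2
  erw [← Algebra.top_toSubmodule, h2]
  refine Submodule.span_le.2 fun x hx => ?_
  induction hx using Submonoid.closure_induction with
  | mem x hx =>
    obtain ⟨i, rfl⟩ := hx
    exact P_antitone m p (Nat.zero_le 1) (X_mem_P_one m p i)
  | one => exact one_mem_P_zero m p
  | mul x y _ _ hx hy =>
    -- x * y where x, y ∈ P 0 : use that products of monomials are monomials;
    -- here we use the general multiplicativity proved below inline.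
    exact mul_mem_aux hx hy
where
  mul_mem_aux {a b : TruncatedFreeAlgebra ℤ m p} (ha : a ∈ P m p 0) (hb : b ∈ P m p 0) :
      a * b ∈ P m p 0 := by
    have h : a * b ∈ P m p 0 * P m p 0 := Submodule.mul_mem_mul ha hb
    erw [P, Submodule.span_mul_span] at h
    refine Submodule.span_le.2 ?_ h
    rintro _ ⟨x, ⟨l1, _, rfl⟩, y, ⟨l2, _, rfl⟩, rfl⟩
    exact Submodule.subset_span ⟨l1 ++ l2, by simp, by simp⟩

lemma P_mul {j k : ℕ} {a b : TruncatedFreeAlgebra ℤ m p}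
    (ha : a ∈ P m p j) (hb : b ∈ P m p k) : a * b ∈ P m p (j + k) := by
  have h : a * b ∈ P m p j * P m p k := Submodule.mul_mem_mul ha hb
  erw [P, P, Submodule.span_mul_span] at h
  refine Submodule.span_le.2 ?_ h
  rintro _ ⟨x, ⟨l1, hl1, rfl⟩, y, ⟨l2, hl2, rfl⟩, rfl⟩
  exact Submodule.subset_span ⟨l1 ++ l2, by simp; omega, by simp⟩

lemma prod_eq_zero_of_length (l : List (Fin m)) (hl : l.length = p) :
    (l.map (TruncatedFreeAlgebra.X ℤ m p)).prod = 0 := by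
  set f : Fin p → Fin m := fun j => l.get (Fin.cast hl.symm j) with hf
  have hlf : l = List.ofFn f := by
    refine List.ext_get (by simp [hl]) fun n h1 h2 => ?_
    simp [hf, List.get_ofFn]
  have r : TruncRel ℤ m p ((List.ofFn fun j => FreeAlgebra.ι ℤ (f j)).prod) 0 :=
    ⟨f, rfl, rfl⟩
  have h2 := RingQuot.mkRingHom_rel r
  rw [map_zero] at h2
  have h3 : (List.ofFn fun j => FreeAlgebra.ι ℤ (f j)) = l.map (FreeAlgebra.ι ℤ) := by
    rw [hlf, List.map_ofFn]; rfl
  rw [h3] at h2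
  calc (l.map (TruncatedFreeAlgebra.X ℤ m p)).prod
      = ((l.map (FreeAlgebra.ι ℤ)).map (RingQuot.mkRingHom (TruncRel ℤ m p))).prod := by
        rw [List.map_map]; rfl
    _ = RingQuot.mkRingHom (TruncRel ℤ m p) (l.map (FreeAlgebra.ι ℤ)).prod :=
        (map_list_prod _ _).symm
    _ = 0 := h2

lemma P_p_eq_bot {x : TruncatedFreeAlgebra ℤ m p} (hx : x ∈ P m p p) : x = 0 := by
  have : P m p p ≤ ⊥ := by
    refine Submodule.span_le.2 ?_
    rintro _ ⟨l, hl, rfl⟩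
    have hsplit : l = l.take p ++ l.drop p := (List.take_append_drop p l).symm
    have htake : (l.take p).length = p := by
      rw [List.length_take]; omega
    rw [hsplit, List.map_append, List.prod_append,
      prod_eq_zero_of_length m p _ htake, zero_mul]
    exact Submodule.zero_mem ⊥
  simpa using this hx

lemma pow_mem_P {a : TruncatedFreeAlgebra ℤ m p} (ha : a ∈ P m p 1) (k : ℕ) :
    a ^ k ∈ P m p k := by
  induction k with
  | zero => simpa [P_zero_eq_top] using Submodule.mem_top
  | succ k ih => rw [pow_succ]; exact P_mul m p ih ha

lemma magnus_sub_one_mem (w : FreeGroup (Fin m)) :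
    ((magnusTrunc ℤ m p w : (TruncatedFreeAlgebra ℤ m p)ˣ) :
      TruncatedFreeAlgebra ℤ m p) - 1 ∈ P m p 1 := by
  induction w using FreeGroup.induction_on with
  | C1 => simp
  | of i =>
    show ((magnusTrunc ℤ m p (FreeGroup.of i) : (TruncatedFreeAlgebra ℤ m p)ˣ) :
      TruncatedFreeAlgebra ℤ m p) - 1 ∈ P m p 1
    have : magnusTrunc ℤ m p (FreeGroup.of i) =
        ((TruncatedFreeAlgebra.isNilpotent_X ℤ m p i).isUnit_one_add).unit := by
      simp [magnusTrunc]
    rw [this, IsUnit.unit_spec, add_sub_cancel_left]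
    exact X_mem_P_one m p i
  | inv_of i h =>
    show ((magnusTrunc ℤ m p (FreeGroup.of i)⁻¹ : (TruncatedFreeAlgebra ℤ m p)ˣ) :
      TruncatedFreeAlgebra ℤ m p) - 1 ∈ P m p 1
    have h' : ((magnusTrunc ℤ m p (FreeGroup.of i) : (TruncatedFreeAlgebra ℤ m p)ˣ) :
      TruncatedFreeAlgebra ℤ m p) - 1 ∈ P m p 1 := h
    rw [map_inv]
    set u := magnusTrunc ℤ m p (FreeGroup.of i)
    have key : ((u⁻¹ : (TruncatedFreeAlgebra ℤ m p)ˣ) : TruncatedFreeAlgebra ℤ m p) - 1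
        = (u⁻¹ : (TruncatedFreeAlgebra ℤ m p)ˣ) * (-(((u : TruncatedFreeAlgebra ℤ m p)) - 1)) := by
      rw [neg_sub, mul_sub, mul_one, Units.inv_mul]
    rw [key]
    have hu : ((u⁻¹ : (TruncatedFreeAlgebra ℤ m p)ˣ) : TruncatedFreeAlgebra ℤ m p)
        ∈ P m p 0 := by rw [P_zero_eq_top]; exact Submodule.mem_top
    simpa using P_mul m p hu (Submodule.neg_mem _ h')
  | mul x y hx hy =>
    rw [map_mul]
    set a := ((magnusTrunc ℤ m p x : (TruncatedFreeAlgebra ℤ m p)ˣ) :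
      TruncatedFreeAlgebra ℤ m p)
    set b := ((magnusTrunc ℤ m p y : (TruncatedFreeAlgebra ℤ m p)ˣ) :
      TruncatedFreeAlgebra ℤ m p)
    have key : (magnusTrunc ℤ m p x * magnusTrunc ℤ m p y :
        (TruncatedFreeAlgebra ℤ m p)ˣ).val - 1
        = (a - 1) * (b - 1) + (a - 1) + (b - 1) := by
      rw [Units.val_mul, sub_mul, mul_sub, mul_one, one_mul]; abel
    rw [key]
    exact Submodule.add_mem _
      (Submodule.add_mem _ (P_antitone m p (by norm_num) (P_mul m p hx hy)) hx) hy

end MagnusAux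

/-- For a prime `p` and every `w ∈ F_m`, the element `E(w)^p - 1` of the truncated
free algebra `D_{m,p}(ℤ)` lies in the ideal generated by `p`; i.e.
`E(w^p) ≡ 1 + (terms of degree ≥ p)` modulo `p`. -/
theorem magnusTrunc_pow_prime_sub_one_mem (p : ℕ) (hp : p.Prime) (m : ℕ) (hm : 1 ≤ m)
    (w : FreeGroup (Fin m)) :
    ((magnusTrunc ℤ m p w ^ p : (TruncatedFreeAlgebra ℤ m p)ˣ) :
        TruncatedFreeAlgebra ℤ m p) - 1 ∈
      TwoSidedIdeal.span {(p : TruncatedFreeAlgebra ℤ m p)} := by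
  set D := TruncatedFreeAlgebra ℤ m p
  set u := magnusTrunc ℤ m p w
  set a : D := (u : D) - 1 with ha_def
  have ha : a ∈ MagnusAux.P m p 1 := MagnusAux.magnus_sub_one_mem m p w
  have hap : a ^ p = 0 := MagnusAux.P_p_eq_bot m p (MagnusAux.pow_mem_P m p ha p)
  have hu : (u : D) = a + 1 := by rw [ha_def, sub_add_cancel]
  have hbinom : ((u ^ p : (TruncatedFreeAlgebra ℤ m p)ˣ) : D)
      = ∑ k ∈ Finset.range (p + 1), a ^ k * 1 ^ (p - k) * (p.choose k : D) := by
    rw [Units.val_pow_eq_pow_val, hu, Commute.add_pow (Commute.one_right a)]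
  have hsub : ((u ^ p : (TruncatedFreeAlgebra ℤ m p)ˣ) : D) - 1
      = ∑ k ∈ Finset.range p, a ^ (k + 1) * (p.choose (k + 1) : D) := by
    rw [hbinom, Finset.sum_range_succ']
    simp
    exact add_sub_cancel_right _ _
  rw [hsub]
  refine sum_mem fun k hk => ?_
  rw [Finset.mem_range] at hk
  by_cases hkp : k + 1 = p
  · rw [hkp, hap, zero_mul]
    exact zero_mem _
  · have hdvd : p ∣ p.choose (k + 1) :=
      hp.dvd_choose_self (Nat.succ_ne_zero k) (by omega)
    obtain ⟨c, hc⟩ := hdvd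
    have : (p.choose (k + 1) : D) = (p : D) * (c : D) := by
      rw [hc]; exact Nat.cast_mul p c
    rw [this]
    exact TwoSidedIdeal.mul_mem_left _ _ _
      (TwoSidedIdeal.mul_mem_right _ _ _ (TwoSidedIdeal.subset_span rfl))
end
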